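/- Let k ∈ {0,…,d−1}, j2 ∈ {1,…,d−k} and j1' ∈ {1,…,k+1}. Then β̲_{k,j2} ≤ β̄_{k+1,j1'}. Moreover both quantities lie in the interval [−ln(sup_n ‖A(n)⁻¹‖), ln(sup_n ‖A(n)‖)]. -/
import Mathlib


open Set Filter Topology

noncomputable section

abbrev Euc (d : ℕ) := EuclideanSpace ℝ (Fin d)

/-- The solution `x(n, x₀)` of `x(n+1) = A(n) x(n)`, `x(0,x₀) = x₀`. -/
def sol {d : ℕ} (A : ℕ → (Euc d ≃L[ℝ] Euc d)) : ℕ → Euc d → Euc d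
  | 0, x => x
  | n + 1, x => A n (sol A n x)

/-- Boundedness of the coefficients `A(n)` and their inverses. -/
def BddSys {d : ℕ} (A : ℕ → (Euc d ≃L[ℝ] Euc d)) : Prop :=
  (∃ c : ℝ, ∀ n : ℕ, ‖(A n : Euc d →L[ℝ] Euc d)‖ ≤ c) ∧
  (∃ c : ℝ, ∀ n : ℕ, ‖((A n).symm : Euc d →L[ℝ] Euc d)‖ ≤ c)

/-- `𝒢_j(L)` : the set of `j`-dimensional subspaces of `L`. -/
def Gr {d : ℕ} (j : ℕ) (L : Submodule ℝ (Euc d)) : Set (Submodule ℝ (Euc d)) :=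
  {U | U ≤ L ∧ Module.finrank ℝ U = j}

/-- Upper Bohl exponent `β̄(U)` (with the convention `sSup ∅ = -∞` in `EReal`). -/
def upperBohl {d : ℕ} (A : ℕ → (Euc d ≃L[ℝ] Euc d)) (U : Submodule ℝ (Euc d)) : EReal :=
  ⨅ N : ℕ, sSup {r : EReal | ∃ m n : ℕ, ∃ x₀ ∈ U, x₀ ≠ 0 ∧ N < n - m ∧
    r = ((((n : ℝ) - (m : ℝ))⁻¹ * Real.log (‖sol A n x₀‖ / ‖sol A m x₀‖) : ℝ) : EReal)}

/-- Lower Bohl exponent `β̲(U)` (with the convention `sInf ∅ = +∞` in `EReal`). -/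
def lowerBohl {d : ℕ} (A : ℕ → (Euc d ≃L[ℝ] Euc d)) (U : Submodule ℝ (Euc d)) : EReal :=
  ⨆ N : ℕ, sInf {r : EReal | ∃ m n : ℕ, ∃ x₀ ∈ U, x₀ ≠ 0 ∧ N < n - m ∧
    r = ((((n : ℝ) - (m : ℝ))⁻¹ * Real.log (‖sol A n x₀‖ / ‖sol A m x₀‖) : ℝ) : EReal)}

/-- Limiting upper Bohl exponent `β̄_{k,j}`. -/
def upperBohlLim {d : ℕ} (A : ℕ → (Euc d ≃L[ℝ] Euc d)) (k j : ℕ) : EReal :=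
  ⨅ L ∈ {L : Submodule ℝ (Euc d) | Module.finrank ℝ L = k},
    ⨆ U ∈ Gr j L, upperBohl A U

/-- Limiting lower Bohl exponent `β̲_{k,j}`. -/
def lowerBohlLim {d : ℕ} (A : ℕ → (Euc d ≃L[ℝ] Euc d)) (k j : ℕ) : EReal :=
  ⨆ L ∈ {L : Submodule ℝ (Euc d) | Module.finrank ℝ L = d - k},
    ⨅ U ∈ Gr j L, lowerBohl A U

/-! ### Auxiliary lemmas -/

section Aux

open Module

variable {d : ℕ} (A : ℕ → (Euc d ≃L[ℝ] Euc d))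

lemma sol_ne_zero {x : Euc d} (hx : x ≠ 0) : ∀ n, sol A n x ≠ 0 := by
  intro n; induction n with
  | zero => exact hx
  | succ n ih => exact fun h => ih ((A n).map_eq_zero_iff.mp h)

lemma norm_sol_le {C : ℝ} (hC : ∀ n, ‖(A n : Euc d →L[ℝ] Euc d)‖ ≤ C) (m : ℕ) (x : Euc d) :
    ∀ p, ‖sol A (m + p) x‖ ≤ C ^ p * ‖sol A m x‖ := by
  have hC0 : 0 ≤ C := le_trans (norm_nonneg _) (hC 0)
  intro p; induction p with
  | zero => simp
  | succ p ih =>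
    have h1 : ‖sol A (m + (p+1)) x‖ ≤ C * ‖sol A (m+p) x‖ := by
      show ‖A (m+p) (sol A (m+p) x)‖ ≤ _
      calc ‖A (m+p) (sol A (m+p) x)‖ ≤ ‖(A (m+p) : Euc d →L[ℝ] Euc d)‖ * ‖sol A (m+p) x‖ :=
            (A (m+p) : Euc d →L[ℝ] Euc d).le_opNorm _
        _ ≤ C * ‖sol A (m+p) x‖ := mul_le_mul_of_nonneg_right (hC _) (norm_nonneg _)
    calc ‖sol A (m + (p+1)) x‖ ≤ C * ‖sol A (m+p) x‖ := h1
      _ ≤ C * (C ^ p * ‖sol A m x‖) := mul_le_mul_of_nonneg_left ih hC0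
      _ = C ^ (p+1) * ‖sol A m x‖ := by ring

lemma norm_sol_ge {D : ℝ} (hD : ∀ n, ‖((A n).symm : Euc d →L[ℝ] Euc d)‖ ≤ D) (m : ℕ) (x : Euc d) :
    ∀ p, ‖sol A m x‖ ≤ D ^ p * ‖sol A (m + p) x‖ := by
  have hD0 : 0 ≤ D := le_trans (norm_nonneg _) (hD 0)
  intro p; induction p with
  | zero => simp
  | succ p ih =>
    have h1 : ‖sol A (m+p) x‖ ≤ D * ‖sol A (m + (p+1)) x‖ := by
      have : sol A (m+p) x = (A (m+p)).symm (sol A (m + (p+1)) x) := by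
        show _ = (A (m+p)).symm (A (m+p) (sol A (m+p) x)); simp
      rw [this]
      calc ‖((A (m+p)).symm) (sol A (m+(p+1)) x)‖
          ≤ ‖((A (m+p)).symm : Euc d →L[ℝ] Euc d)‖ * ‖sol A (m+(p+1)) x‖ :=
            ((A (m+p)).symm : Euc d →L[ℝ] Euc d).le_opNorm _
        _ ≤ D * ‖sol A (m+(p+1)) x‖ := mul_le_mul_of_nonneg_right (hD _) (norm_nonneg _)
    calc ‖sol A m x‖ ≤ D ^ p * ‖sol A (m+p) x‖ := ih
      _ ≤ D ^ p * (D * ‖sol A (m+(p+1)) x‖) := mul_le_mul_of_nonneg_left h1 (pow_nonneg hD0 p)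
      _ = D ^ (p+1) * ‖sol A (m+(p+1)) x‖ := by ring

lemma ratio_bound {C D : ℝ} (hC : ∀ n, ‖(A n : Euc d →L[ℝ] Euc d)‖ ≤ C)
    (hD : ∀ n, ‖((A n).symm : Euc d →L[ℝ] Euc d)‖ ≤ D)
    {x : Euc d} (hx : x ≠ 0) {m n : ℕ} (hmn : m < n) :
    -Real.log D ≤ ((n : ℝ) - (m : ℝ))⁻¹ * Real.log (‖sol A n x‖ / ‖sol A m x‖) ∧
    ((n : ℝ) - (m : ℝ))⁻¹ * Real.log (‖sol A n x‖ / ‖sol A m x‖) ≤ Real.log C := by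
  have hC0 : 0 ≤ C := le_trans (norm_nonneg _) (hC 0)
  have hD0 : 0 ≤ D := le_trans (norm_nonneg _) (hD 0)
  set p := n - m with hpdef
  have hn : n = m + p := by omega
  have hp : 0 < p := by omega
  have hm0 : 0 < ‖sol A m x‖ := norm_pos_iff.mpr (sol_ne_zero A hx m)
  have hn0 : 0 < ‖sol A n x‖ := norm_pos_iff.mpr (sol_ne_zero A hx n)
  have h1 : ‖sol A n x‖ ≤ C ^ p * ‖sol A m x‖ := hn ▸ norm_sol_le A hC m x p
  have h2 : ‖sol A m x‖ ≤ D ^ p * ‖sol A n x‖ := hn ▸ norm_sol_ge A hD m x p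
  have hCpos : 0 < C := by
    rcases hC0.lt_or_eq with h | h
    · exact h
    · exfalso; rw [← h, zero_pow hp.ne', zero_mul] at h1; exact absurd h1 (not_le.mpr hn0)
  have hDpos : 0 < D := by
    rcases hD0.lt_or_eq with h | h
    · exact h
    · exfalso; rw [← h, zero_pow hp.ne', zero_mul] at h2; exact absurd h2 (not_le.mpr hm0)
  have hcast : (n : ℝ) - (m : ℝ) = (p : ℝ) := by
    rw [hn]; push_cast; ring
  have hppos : (0 : ℝ) < (p : ℝ) := Nat.cast_pos.mpr hp
  rw [hcast]
  have hratio : 0 < ‖sol A n x‖ / ‖sol A m x‖ := div_pos hn0 hm0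
  constructor
  · have hge : (D ^ p)⁻¹ ≤ ‖sol A n x‖ / ‖sol A m x‖ := by
      rw [inv_le_iff_one_le_mul₀ (pow_pos hDpos p), div_mul_eq_mul_div, le_div_iff₀ hm0, one_mul,
        mul_comm]
      exact h2
    have hlog : Real.log ((D ^ p)⁻¹) ≤ Real.log (‖sol A n x‖ / ‖sol A m x‖) :=
      Real.log_le_log (by positivity) hge
    rw [Real.log_inv, Real.log_pow] at hlog
    have := mul_le_mul_of_nonneg_left hlog (inv_nonneg.mpr hppos.le)
    calc -Real.log D = (p : ℝ)⁻¹ * -((p : ℝ) * Real.log D) := by field_simp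
      _ ≤ _ := this
  · have hle : ‖sol A n x‖ / ‖sol A m x‖ ≤ C ^ p := by
      rw [div_le_iff₀ hm0]; exact h1
    have hlog : Real.log (‖sol A n x‖ / ‖sol A m x‖) ≤ Real.log (C ^ p) :=
      Real.log_le_log hratio hle
    rw [Real.log_pow] at hlog
    have := mul_le_mul_of_nonneg_left hlog (inv_nonneg.mpr hppos.le)
    calc (p : ℝ)⁻¹ * Real.log (‖sol A n x‖ / ‖sol A m x‖) ≤ (p:ℝ)⁻¹ * ((p:ℝ) * Real.log C) := this
      _ = Real.log C := by field_simp

lemma exists_sandwich (W L : Submodule ℝ (Euc d)) (hWL : W ≤ L) (j : ℕ)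
    (h1 : finrank ℝ W ≤ j) (h2 : j ≤ finrank ℝ L) :
    ∃ U : Submodule ℝ (Euc d), W ≤ U ∧ U ≤ L ∧ finrank ℝ U = j := by
  obtain ⟨p, hp⟩ : ∃ p, j = finrank ℝ W + p := ⟨j - finrank ℝ W, by omega⟩
  subst hp
  clear h1
  induction p generalizing W with
  | zero => exact ⟨W, le_rfl, hWL, by omega⟩
  | succ p ih =>
    have hlt : W < L := lt_of_le_of_ne hWL (by rintro rfl; omega)
    obtain ⟨x, hxL, hxW⟩ := SetLike.exists_of_lt hlt
    have hx0 : x ≠ 0 := fun h => hxW (h ▸ W.zero_mem)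
    set W' := W ⊔ (ℝ ∙ x) with hW'def
    have hxW' : x ∈ W' := Submodule.mem_sup_right (Submodule.mem_span_singleton_self x)
    have hW'L : W' ≤ L := sup_le hWL ((Submodule.span_singleton_le_iff_mem x L).mpr hxL)
    have hfin : finrank ℝ W' = finrank ℝ W + 1 := by
      have h3 := Submodule.finrank_sup_add_finrank_inf_eq W (ℝ ∙ x)
      rw [← hW'def] at h3
      have h4 : finrank ℝ (ℝ ∙ x : Submodule ℝ (Euc d)) = 1 := finrank_span_singleton hx0
      have h5 : finrank ℝ W < finrank ℝ W' :=
        Submodule.finrank_lt_finrank_of_lt (lt_of_le_of_ne le_sup_left (fun h => hxW (h ▸ hxW')))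
      omega
    obtain ⟨U, hU1, hU2, hU3⟩ := ih W' hW'L (by omega)
    exact ⟨U, le_trans le_sup_left hU1, hU2, by omega⟩

lemma exists_dim (j : ℕ) (hj : j ≤ d) :
    ∃ L : Submodule ℝ (Euc d), finrank ℝ L = j := by
  obtain ⟨U, -, -, hU⟩ := exists_sandwich (⊥ : Submodule ℝ (Euc d)) ⊤ bot_le j
    (by simp) (by simp [finrank_top, finrank_euclideanSpace]; exact hj)
  exact ⟨U, hU⟩

lemma exists_nonzero {U : Submodule ℝ (Euc d)} (hU : 0 < finrank ℝ U) :
    ∃ x ∈ U, x ≠ 0 := by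
  have : Nontrivial U := Module.nontrivial_of_finrank_pos hU
  obtain ⟨u, hu⟩ := exists_ne (0 : U)
  exact ⟨u.1, u.2, fun h => hu (Subtype.ext h)⟩

lemma exists_common (L₁ L₂ : Submodule ℝ (Euc d))
    (h : d < finrank ℝ L₁ + finrank ℝ L₂) :
    ∃ x, x ≠ 0 ∧ x ∈ L₁ ∧ x ∈ L₂ := by
  have h3 := Submodule.finrank_sup_add_finrank_inf_eq L₁ L₂
  have hle : finrank ℝ (L₁ ⊔ L₂ : Submodule ℝ (Euc d)) ≤ d := by
    have := Submodule.finrank_le (L₁ ⊔ L₂ : Submodule ℝ (Euc d))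
    simpa [finrank_euclideanSpace] using this
  obtain ⟨x, hx, hx0⟩ := exists_nonzero (U := L₁ ⊓ L₂) (by omega)
  exact ⟨x, hx0, hx.1, hx.2⟩

def BSet (U : Submodule ℝ (Euc d)) (N : ℕ) : Set EReal :=
  {r : EReal | ∃ m n : ℕ, ∃ x₀ ∈ U, x₀ ≠ 0 ∧ N < n - m ∧
    r = ((((n : ℝ) - (m : ℝ))⁻¹ * Real.log (‖sol A n x₀‖ / ‖sol A m x₀‖) : ℝ) : EReal)}

lemma upperBohl_eq (U : Submodule ℝ (Euc d)) : upperBohl A U = ⨅ N : ℕ, sSup (BSet A U N) := rfl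
lemma lowerBohl_eq (U : Submodule ℝ (Euc d)) : lowerBohl A U = ⨆ N : ℕ, sInf (BSet A U N) := rfl

variable {C D : ℝ}

lemma mem_BSet_bound (hC : ∀ n, ‖(A n : Euc d →L[ℝ] Euc d)‖ ≤ C)
    (hD : ∀ n, ‖((A n).symm : Euc d →L[ℝ] Euc d)‖ ≤ D)
    {U : Submodule ℝ (Euc d)} {N : ℕ} {r : EReal} (hr : r ∈ BSet A U N) :
    ((-Real.log D : ℝ) : EReal) ≤ r ∧ r ≤ ((Real.log C : ℝ) : EReal) := by
  obtain ⟨m, n, x₀, hxU, hx0, hN, rfl⟩ := hr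
  have hmn : m < n := by omega
  have hb := ratio_bound A hC hD hx0 hmn
  exact ⟨EReal.coe_le_coe_iff.mpr hb.1, EReal.coe_le_coe_iff.mpr hb.2⟩

lemma BSet_nonempty {U : Submodule ℝ (Euc d)} (hU : ∃ x ∈ U, x ≠ 0) (N : ℕ) :
    (BSet A U N).Nonempty := by
  obtain ⟨x, hxU, hx0⟩ := hU
  exact ⟨_, 0, N + 1, x, hxU, hx0, by omega, rfl⟩

lemma le_upperBohl' (hC : ∀ n, ‖(A n : Euc d →L[ℝ] Euc d)‖ ≤ C)
    (hD : ∀ n, ‖((A n).symm : Euc d →L[ℝ] Euc d)‖ ≤ D)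
    {U : Submodule ℝ (Euc d)} (hU : ∃ x ∈ U, x ≠ 0) :
    ((-Real.log D : ℝ) : EReal) ≤ upperBohl A U := by
  rw [upperBohl_eq]
  refine le_iInf fun N => ?_
  obtain ⟨r, hr⟩ := BSet_nonempty A hU N
  exact le_trans (mem_BSet_bound A hC hD hr).1 (le_sSup hr)

lemma upperBohl_le' (hC : ∀ n, ‖(A n : Euc d →L[ℝ] Euc d)‖ ≤ C)
    (hD : ∀ n, ‖((A n).symm : Euc d →L[ℝ] Euc d)‖ ≤ D) (U : Submodule ℝ (Euc d)) :
    upperBohl A U ≤ ((Real.log C : ℝ) : EReal) := by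
  rw [upperBohl_eq]
  exact iInf_le_of_le 0 (sSup_le fun _ hr => (mem_BSet_bound A hC hD hr).2)

lemma le_lowerBohl' (hC : ∀ n, ‖(A n : Euc d →L[ℝ] Euc d)‖ ≤ C)
    (hD : ∀ n, ‖((A n).symm : Euc d →L[ℝ] Euc d)‖ ≤ D) (U : Submodule ℝ (Euc d)) :
    ((-Real.log D : ℝ) : EReal) ≤ lowerBohl A U := by
  rw [lowerBohl_eq]
  exact le_iSup_of_le 0 (le_sInf fun _ hr => (mem_BSet_bound A hC hD hr).1)

lemma lowerBohl_le' (hC : ∀ n, ‖(A n : Euc d →L[ℝ] Euc d)‖ ≤ C)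
    (hD : ∀ n, ‖((A n).symm : Euc d →L[ℝ] Euc d)‖ ≤ D)
    {U : Submodule ℝ (Euc d)} (hU : ∃ x ∈ U, x ≠ 0) :
    lowerBohl A U ≤ ((Real.log C : ℝ) : EReal) := by
  rw [lowerBohl_eq]
  refine iSup_le fun N => ?_
  obtain ⟨r, hr⟩ := BSet_nonempty A hU N
  exact le_trans (sInf_le hr) (mem_BSet_bound A hC hD hr).2

lemma lowerBohl_le_upperBohl {U U' : Submodule ℝ (Euc d)} {x : Euc d}
    (hx : x ≠ 0) (hU : x ∈ U) (hU' : x ∈ U') :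
    lowerBohl A U ≤ upperBohl A U' := by
  rw [lowerBohl_eq, upperBohl_eq]
  refine iSup_le fun N => le_iInf fun N' => ?_
  set n := max N N' + 1 with hn
  have hr : ((((n : ℝ) - ((0:ℕ) : ℝ))⁻¹ *
      Real.log (‖sol A n x‖ / ‖sol A 0 x‖) : ℝ) : EReal) ∈ BSet A U N :=
    ⟨0, n, x, hU, hx, by omega, rfl⟩
  have hr' : ((((n : ℝ) - ((0:ℕ) : ℝ))⁻¹ *
      Real.log (‖sol A n x‖ / ‖sol A 0 x‖) : ℝ) : EReal) ∈ BSet A U' N' :=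
    ⟨0, n, x, hU', hx, by omega, rfl⟩
  exact le_trans (sInf_le hr) (le_sSup hr')

end Aux

/-- **Ordering of the limiting Bohl exponents**, together with the bounds
`β̲_{k,j2}, β̄_{k+1,j1'} ∈ [-ln(supₙ ‖A(n)⁻¹‖), ln(supₙ ‖A(n)‖)]`. -/
theorem lowerBohlLim_le_upperBohlLim {d : ℕ} (hd : 1 ≤ d)
    (A : ℕ → (Euc d ≃L[ℝ] Euc d)) (hA : BddSys A)
    (k j2 j1' : ℕ) (hk : k ≤ d - 1)
    (hj2 : 1 ≤ j2) (hj2' : j2 ≤ d - k) (hj1 : 1 ≤ j1') (hj1' : j1' ≤ k + 1) :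
    lowerBohlLim A k j2 ≤ upperBohlLim A (k + 1) j1' ∧
    ((-Real.log (⨆ n : ℕ, ‖((A n).symm : Euc d →L[ℝ] Euc d)‖) : ℝ) : EReal)
      ≤ lowerBohlLim A k j2 ∧
    lowerBohlLim A k j2
      ≤ ((Real.log (⨆ n : ℕ, ‖(A n : Euc d →L[ℝ] Euc d)‖) : ℝ) : EReal) ∧
    ((-Real.log (⨆ n : ℕ, ‖((A n).symm : Euc d →L[ℝ] Euc d)‖) : ℝ) : EReal)
      ≤ upperBohlLim A (k + 1) j1' ∧
    upperBohlLim A (k + 1) j1'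
      ≤ ((Real.log (⨆ n : ℕ, ‖(A n : Euc d →L[ℝ] Euc d)‖) : ℝ) : EReal) := by
  classical
  open Module in
  obtain ⟨⟨c1, hc1⟩, ⟨c2, hc2⟩⟩ := hA
  set C := ⨆ n : ℕ, ‖(A n : Euc d →L[ℝ] Euc d)‖ with hCdef
  set D := ⨆ n : ℕ, ‖((A n).symm : Euc d →L[ℝ] Euc d)‖ with hDdef
  have hC : ∀ n, ‖(A n : Euc d →L[ℝ] Euc d)‖ ≤ C :=
    fun n => le_ciSup ⟨c1, by rintro _ ⟨n, rfl⟩; exact hc1 n⟩ n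
  have hD : ∀ n, ‖((A n).symm : Euc d →L[ℝ] Euc d)‖ ≤ D :=
    fun n => le_ciSup ⟨c2, by rintro _ ⟨n, rfl⟩; exact hc2 n⟩ n
  refine ⟨?_, ?_, ?_, ?_, ?_⟩
  · -- main inequality
    simp only [lowerBohlLim, upperBohlLim]
    refine iSup₂_le fun L₂ hL₂ => le_iInf₂ fun L₁ hL₁ => ?_
    simp only [Set.mem_setOf_eq] at hL₂ hL₁
    obtain ⟨x, hx0, hxL₁, hxL₂⟩ := exists_common L₁ L₂ (by omega)
    have hspan₁ : (ℝ ∙ x) ≤ L₁ := (Submodule.span_singleton_le_iff_mem x L₁).mpr hxL₁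
    have hspan₂ : (ℝ ∙ x) ≤ L₂ := (Submodule.span_singleton_le_iff_mem x L₂).mpr hxL₂
    have hsr : finrank ℝ (ℝ ∙ x : Submodule ℝ (Euc d)) = 1 := finrank_span_singleton hx0
    obtain ⟨U₂, hWU₂, hU₂L, hU₂r⟩ := exists_sandwich (ℝ ∙ x) L₂ hspan₂ j2
      (by omega) (by omega)
    obtain ⟨U₁, hWU₁, hU₁L, hU₁r⟩ := exists_sandwich (ℝ ∙ x) L₁ hspan₁ j1'
      (by omega) (by omega)
    have hxU₂ : x ∈ U₂ := hWU₂ (Submodule.mem_span_singleton_self x)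
    have hxU₁ : x ∈ U₁ := hWU₁ (Submodule.mem_span_singleton_self x)
    exact le_trans (iInf₂_le U₂ ⟨hU₂L, hU₂r⟩)
      (le_trans (lowerBohl_le_upperBohl A hx0 hxU₂ hxU₁)
        (le_iSup₂_of_le U₁ ⟨hU₁L, hU₁r⟩ le_rfl))
  · -- lower bound for lowerBohlLim
    obtain ⟨L₂, hL₂⟩ := exists_dim (d := d) (d - k) (by omega)
    simp only [lowerBohlLim]
    exact le_iSup₂_of_le L₂ hL₂ (le_iInf₂ fun U _ => le_lowerBohl' A hC hD U)
  · -- upper bound for lowerBohlLim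
    simp only [lowerBohlLim]
    refine iSup₂_le fun L₂ hL₂ => ?_
    simp only [Set.mem_setOf_eq] at hL₂
    obtain ⟨U₂, -, hU₂L, hU₂r⟩ := exists_sandwich ⊥ L₂ bot_le j2 (by simp) (by omega)
    have hne := exists_nonzero (U := U₂) (by omega)
    exact iInf₂_le_of_le U₂ ⟨hU₂L, hU₂r⟩ (lowerBohl_le' A hC hD hne)
  · -- lower bound for upperBohlLim
    simp only [upperBohlLim]
    refine le_iInf₂ fun L₁ hL₁ => ?_
    simp only [Set.mem_setOf_eq] at hL₁
    obtain ⟨U₁, -, hU₁L, hU₁r⟩ := exists_sandwich ⊥ L₁ bot_le j1' (by simp) (by omega)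
    have hne := exists_nonzero (U := U₁) (by omega)
    exact le_iSup₂_of_le U₁ ⟨hU₁L, hU₁r⟩ (le_upperBohl' A hC hD hne)
  · -- upper bound for upperBohlLim
    obtain ⟨L₁, hL₁⟩ := exists_dim (d := d) (k + 1) (by omega)
    simp only [upperBohlLim]
    exact iInf₂_le_of_le L₁ hL₁ (iSup₂_le fun U _ => upperBohl_le' A hC hD U)

end
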